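/- arXiv:2404.12930 — 4 statements merged into one kernel-verified Lean document; each statement's English description precedes it below -/
import Mathlib

section
/- In any connected simple graph G on n vertices with minimum degree δ ≥ 1, the diameter D of G satisfies D ≤ 3n/δ (more precisely, n ≥ (D/3)·δ when D ≥ 3, so D = O(n/δ)). -/
private lemma dist_getVert_le_aux {V : Type*} {G : SimpleGraph V} (hconn : G.Connected)
    {u v : V} (p : G.Walk u v) : ∀ i : ℕ, G.dist u (p.getVert i) ≤ i := by
  induction p with
  | nil =>
    intro i
    rw [SimpleGraph.Walk.getVert_of_length_le _ (by simp), SimpleGraph.dist_self]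
    exact Nat.zero_le _
  | @cons a b c h q ih =>
    intro i
    cases i with
    | zero => simp
    | succ n =>
      rw [SimpleGraph.Walk.getVert_cons_succ]
      calc G.dist a (q.getVert n) ≤ G.dist a b + G.dist b (q.getVert n) :=
            hconn.dist_triangle
        _ ≤ 1 + n := by
            gcongr
            · exact le_of_eq (SimpleGraph.dist_eq_one_iff_adj.mpr h)
            · exact ih n
        _ = n + 1 := by omega

/-- In any connected simple graph on `n` vertices with minimum degree `δ ≥ 1`,
the diameter `D` satisfies `D · δ ≤ 3n`, i.e. `D ≤ 3n/δ`. -/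
theorem stmt_0 {V : Type*} [Fintype V] [Nonempty V] (G : SimpleGraph V)
    [DecidableRel G.Adj] (hconn : G.Connected) (hδ : 1 ≤ G.minDegree) :
    G.diam * G.minDegree ≤ 3 * Fintype.card V := by
  classical
  set D := G.diam with hD
  set δ := G.minDegree with hδ'
  obtain ⟨u, v, huv⟩ := G.exists_dist_eq_diam
  obtain ⟨p, hp⟩ := hconn.exists_walk_length_eq_dist u v
  have hpl : p.length = D := by rw [hp, huv]
  set k := D / 3 with hk
  -- the centers of the balls
  set x : ℕ → V := fun i => p.getVert (3 * i) with hx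
  have hx0 : ∀ i, 3 * i ≤ D → G.dist u (x i) ≤ 3 * i := fun i _ =>
    dist_getVert_le_aux hconn p (3 * i)
  have hxv : ∀ i, 3 * i ≤ D → G.dist (x i) v ≤ D - 3 * i := by
    intro i hi
    have h1 : p.reverse.getVert (p.length - 3 * i) = x i := by
      rw [SimpleGraph.Walk.getVert_reverse]
      congr 1
      omega
    have := dist_getVert_le_aux hconn p.reverse (p.length - 3 * i)
    rw [h1] at this
    rw [SimpleGraph.dist_comm]
    omega
  -- distance between centers is at least 3
  have hdist : ∀ i j, i < j → 3 * j ≤ D → 3 ≤ G.dist (x i) (x j) := by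
    intro i j hij hj
    have hi : 3 * i ≤ D := by omega
    have t1 : G.dist u v ≤ G.dist u (x i) + G.dist (x i) v := hconn.dist_triangle
    have t2 : G.dist (x i) v ≤ G.dist (x i) (x j) + G.dist (x j) v := hconn.dist_triangle
    have h0 := hx0 i hi
    have h1 := hxv j hj
    rw [huv] at t1
    omega
  -- the closed neighborhoods
  set S : ℕ → Finset V := fun i => insert (x i) (G.neighborFinset (x i)) with hS
  have hcard : ∀ i, δ + 1 ≤ (S i).card := by
    intro i
    rw [hS]
    rw [Finset.card_insert_of_notMem (by simp)]
    have := G.minDegree_le_degree (x i)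
    rw [SimpleGraph.card_neighborFinset_eq_degree]
    omega
  have hmem : ∀ i w, w ∈ S i → G.dist (x i) w ≤ 1 := by
    intro i w hw
    rw [hS] at hw
    simp only [Finset.mem_insert, SimpleGraph.mem_neighborFinset] at hw
    rcases hw with rfl | hadj
    · rw [SimpleGraph.dist_self]; exact Nat.zero_le _
    · exact le_of_eq (SimpleGraph.dist_eq_one_iff_adj.mpr hadj)
  have hdisj : ∀ i ∈ Finset.range (k + 1), ∀ j ∈ Finset.range (k + 1), i ≠ j →
      Disjoint (S i) (S j) := by
    have key : ∀ i j, i < j → j < k + 1 → Disjoint (S i) (S j) := by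
      intro i j hij hj
      rw [Finset.disjoint_left]
      intro w hwi hwj
      have h3 : 3 ≤ G.dist (x i) (x j) := hdist i j hij (by omega)
      have t : G.dist (x i) (x j) ≤ G.dist (x i) w + G.dist w (x j) := hconn.dist_triangle
      have h1 := hmem i w hwi
      have h2 := hmem j w hwj
      rw [SimpleGraph.dist_comm] at h2
      omega
    intro i hi j hj hij
    simp only [Finset.mem_range] at hi hj
    rcases lt_or_gt_of_ne hij with h | h
    · exact key i j h hj
    · exact (key j i h hi).symm
  -- counting
  have hsum : (k + 1) * (δ + 1) ≤ Fintype.card V := by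
    calc (k + 1) * (δ + 1) = ∑ _i ∈ Finset.range (k + 1), (δ + 1) := by
          simp [mul_comm]
      _ ≤ ∑ i ∈ Finset.range (k + 1), (S i).card :=
          Finset.sum_le_sum fun i _ => hcard i
      _ = ((Finset.range (k + 1)).biUnion S).card :=
          (Finset.card_biUnion hdisj).symm
      _ ≤ Fintype.card V := Finset.card_le_univ _
  have hDk : D ≤ 3 * k + 2 := by omega
  nlinarith [hsum, hDk, hδ]
end

section
/- Let G be a graph with vertex partition into clusters, where each vertex v is assigned a cluster center s(v) that is either v itself or a neighbor of v. Define the cluster graph G_c on the set of centers, with an edge between centers c_i and c_j iff there exist adjacent vertices v_1, v_2 in G with s(v_1) = c_i and s(v_2) = c_j. Then for all vertices u, v of G: d_{G_c}(s(u), s(v)) ≤ d_G(u,v), and d_G(u,v) ≤ 3·d_{G_c}(s(u), s(v)) + 2. Consequently, d'(u,v) := 3·d_{G_c}(s(u), s(v)) + 2 satisfies d_G(u,v) ≤ d'(u,v) ≤ 3·d_G(u,v) + 2. -/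
/-- The cluster graph: centers are connected iff some edge of `G` joins their
clusters. (Vertices that are not centers are isolated in this graph.) -/
def clusterGraph {V : Type*} (G : SimpleGraph V) (s : V → V) : SimpleGraph V where
  Adj a b := a ≠ b ∧ ∃ v₁ v₂ : V, G.Adj v₁ v₂ ∧ s v₁ = a ∧ s v₂ = b
  symm := by
    constructor
    rintro a b ⟨hab, v₁, v₂, hadj, h₁, h₂⟩
    exact ⟨hab.symm, v₂, v₁, hadj.symm, h₂, h₁⟩
  loopless := by constructor; rintro a ⟨h, -⟩; exact h rfl

private lemma liftWalk {V : Type*} (G : SimpleGraph V) (s : V → V) :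
    ∀ {u v : V} (p : G.Walk u v),
      ∃ q : (clusterGraph G s).Walk (s u) (s v), q.length ≤ p.length := by
  intro u v p
  induction p with
  | nil => exact ⟨SimpleGraph.Walk.nil, le_refl _⟩
  | @cons u w v h p ih =>
    obtain ⟨q, hq⟩ := ih
    by_cases hsw : s u = s w
    · exact ⟨q.copy hsw.symm rfl, by simpa using Nat.le_succ_of_le hq⟩
    · exact ⟨SimpleGraph.Walk.cons ⟨hsw, u, w, h, rfl, rfl⟩ q, Nat.succ_le_succ hq⟩

private lemma distCenter {V : Type*} {G : SimpleGraph V} {s : V → V}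
    (hs : ∀ v, s v = v ∨ G.Adj v (s v)) (v : V) : G.dist v (s v) ≤ 1 := by
  rcases hs v with h | h
  · rw [h, SimpleGraph.dist_self]; exact Nat.zero_le _
  · exact le_of_eq (SimpleGraph.dist_eq_one_iff_adj.mpr h)

private lemma clusterAdjDist {V : Type*} {G : SimpleGraph V} (hG : G.Connected)
    {s : V → V} (hs : ∀ v, s v = v ∨ G.Adj v (s v)) {a b : V}
    (h : (clusterGraph G s).Adj a b) : G.dist a b ≤ 3 := by
  obtain ⟨-, v₁, v₂, hadj, h₁, h₂⟩ := h
  have d1 : G.dist a v₁ ≤ 1 := by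
    rw [← h₁, SimpleGraph.dist_comm]; exact distCenter hs v₁
  have d2 : G.dist v₁ v₂ ≤ 1 := le_of_eq (SimpleGraph.dist_eq_one_iff_adj.mpr hadj)
  have d3 : G.dist v₂ b ≤ 1 := h₂ ▸ distCenter hs v₂
  calc G.dist a b ≤ G.dist a v₁ + G.dist v₁ b := hG.dist_triangle
    _ ≤ G.dist a v₁ + (G.dist v₁ v₂ + G.dist v₂ b) :=
        Nat.add_le_add_left hG.dist_triangle _
    _ ≤ 3 := by omega

private lemma walkDown {V : Type*} {G : SimpleGraph V} (hG : G.Connected)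
    {s : V → V} (hs : ∀ v, s v = v ∨ G.Adj v (s v)) :
    ∀ {a b : V} (q : (clusterGraph G s).Walk a b), G.dist a b ≤ 3 * q.length := by
  intro a b q
  induction q with
  | nil => simp
  | @cons a c b h q ih =>
    have := clusterAdjDist hG hs h
    calc G.dist a b ≤ G.dist a c + G.dist c b := hG.dist_triangle
      _ ≤ 3 + 3 * q.length := by omega
      _ = 3 * (SimpleGraph.Walk.cons h q).length := by simp; ring

/-- Cluster-graph distances approximate graph distances:
`d_{G_c}(s u, s v) ≤ d_G(u,v)` and `d_G(u,v) ≤ 3·d_{G_c}(s u, s v) + 2`;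
consequently `d'(u,v) := 3·d_{G_c}(s u, s v) + 2` is a `(3,2)`-approximation. -/
theorem stmt_6 {V : Type*} (G : SimpleGraph V) (hG : G.Connected)
    (s : V → V) (hs : ∀ v, s v = v ∨ G.Adj v (s v)) (hss : ∀ v, s (s v) = s v)
    (u v : V) :
    (clusterGraph G s).dist (s u) (s v) ≤ G.dist u v ∧
      G.dist u v ≤ 3 * (clusterGraph G s).dist (s u) (s v) + 2 := by
  obtain ⟨p, hp⟩ := (hG u v).exists_walk_length_eq_dist
  obtain ⟨q, hq⟩ := liftWalk G s p
  have h1 : (clusterGraph G s).dist (s u) (s v) ≤ G.dist u v :=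
    le_trans (SimpleGraph.dist_le q) (hp ▸ hq)
  refine ⟨h1, ?_⟩
  obtain ⟨q', hq'⟩ := q.reachable.exists_walk_length_eq_dist
  have h2 : G.dist (s u) (s v) ≤ 3 * (clusterGraph G s).dist (s u) (s v) := by
    have := walkDown hG hs q'
    omega
  calc G.dist u v ≤ G.dist u (s u) + G.dist (s u) v := hG.dist_triangle
    _ ≤ G.dist u (s u) + (G.dist (s u) (s v) + G.dist (s v) v) :=
        Nat.add_le_add_left hG.dist_triangle _
    _ ≤ 3 * (clusterGraph G s).dist (s u) (s v) + 2 := by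
        have := distCenter hs u
        have : G.dist (s v) v ≤ 1 := by
          rw [SimpleGraph.dist_comm]; exact distCenter hs v
        have := distCenter hs u
        omega
end

section
/- Let G be a simple graph with minimum degree δ and edge connectivity λ ≤ δ, and fix distinct vertices u, v. Let 𝒫 be a set of s = max{0, ⌊λ/2⌋ − 2} edge-disjoint u–v paths whose removal leaves u and v connected, chosen to minimize the total length, and let P⋄ be a minimum-length u–v path edge-disjoint from all paths in 𝒫. Call a vertex of P⋄ congested if it lies on more than s/2 paths of 𝒫. Then the set U of non-congested vertices of P⋄ satisfies |U| < 8n/δ. -/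
open SimpleGraph

section aux
variable {V : Type*} [DecidableEq V] {G : SimpleGraph V}

private lemma aux_handshake (w : V) {a b : V} (p : G.Walk a b) :
    p.edges.countP (fun e => decide (w ∈ e)) + (if w = a then 1 else 0)
      + (if w = b then 1 else 0) ≤ 2 * p.support.count w := by
  induction p with
  | nil =>
    rename_i c
    by_cases h : w = c <;> simp [h, List.count_cons]
  | @cons a c b h q ih =>
    rw [Walk.edges_cons, Walk.support_cons, List.countP_cons, List.count_cons]
    by_cases h1 : w = a <;> by_cases h2 : w = c <;>
      simp_all [Sym2.mem_iff] <;> omega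

private lemma aux_getVert {a b w : V} (p : G.Walk a b) (hw : w ∈ p.support) :
    p.getVert ((p.takeUntil w hw).length) = w := by
  have h : ((p.takeUntil w hw).append (p.dropUntil w hw)).getVert
      ((p.takeUntil w hw).length) = w := by
    rw [Walk.getVert_append]
    simp
  rwa [Walk.take_spec] at h

private lemma aux_two [Fintype V] [DecidableRel G.Adj] (w : V) {a b : V} (p : G.Walk a b)
    (hp : p.IsPath) :
    ((G.neighborFinset w).filter (fun x => s(w,x) ∈ p.edges)).card ≤ 2 := by
  classical
  by_cases hw : w ∈ p.support
  · have hcount : p.support.count w = 1 :=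
      List.count_eq_one_of_mem hp.support_nodup hw
    have h1 := aux_handshake w p
    rw [hcount] at h1
    have h2 : p.edges.countP (fun e => decide (w ∈ e)) ≤ 2 := by omega
    calc ((G.neighborFinset w).filter (fun x => s(w,x) ∈ p.edges)).card
        ≤ (p.edges.filter (fun e => decide (w ∈ e))).toFinset.card := by
          apply Finset.card_le_card_of_injOn (fun x => s(w,x))
          · intro x hx
            rw [Finset.mem_coe, Finset.mem_filter] at hx
            rw [Finset.mem_coe, List.mem_toFinset, List.mem_filter]
            exact ⟨hx.2, by simp⟩
          · intro x _ y _ hxy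
            exact Sym2.congr_right.mp hxy
      _ ≤ (p.edges.filter (fun e => decide (w ∈ e))).length := List.toFinset_card_le _
      _ ≤ 2 := by rw [← List.countP_eq_length_filter]; exact h2
  · have : (Finset.filter (fun x => s(w,x) ∈ p.edges) (G.neighborFinset w)) = ∅ := by
      rw [Finset.filter_eq_empty_iff]
      intro x _ hx
      exact hw (p.fst_mem_support_of_mem_edges hx)
    rw [this]
    simp

end aux

/-- Let `G` be a simple graph on `n` vertices with minimum degree `δ` and edge
connectivity (at least) `lam ≤ δ`. Fix distinct `u, v`, let `P` be a family of
`s = max 0 (⌊lam/2⌋ − 2)` pairwise edge-disjoint `u`–`v` paths whose removal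
leaves `u` and `v` connected, minimizing total length among all such families,
and let `d` be a minimum-length `u`–`v` path edge-disjoint from all of `P`.
A vertex of `d` is congested if it lies on more than `s/2` paths of `P`. Then
the set `U` of non-congested vertices of `d` satisfies `|U| < 8n/δ`. -/
theorem stmt_9 {V : Type*} [Fintype V] [DecidableEq V] (G : SimpleGraph V)
    (u v : V) (huv : u ≠ v)
    (δ lam : ℕ) (hδ : 0 < δ) (hlamδ : lam ≤ δ)
    [DecidableRel G.Adj] (hdeg : ∀ w : V, δ ≤ G.degree w)
    (hconn : ∀ F : Finset (Sym2 V), F.card < lam → (G.deleteEdges ↑F).Connected)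
    (P : Finset (G.Walk u v))
    (hPcard : P.card = max 0 (lam / 2 - 2))
    (hPpath : ∀ p ∈ P, p.IsPath)
    (hPdisj : ∀ p ∈ P, ∀ q ∈ P, p ≠ q → ∀ e ∈ p.edges, e ∉ q.edges)
    (hPconn : (G.deleteEdges
        (⋃ p ∈ (↑P : Set (G.Walk u v)), {e | e ∈ p.edges})).Reachable u v)
    (hPmin : ∀ Q : Finset (G.Walk u v), Q.card = max 0 (lam / 2 - 2) →
      (∀ p ∈ Q, p.IsPath) →
      (∀ p ∈ Q, ∀ q ∈ Q, p ≠ q → ∀ e ∈ p.edges, e ∉ q.edges) →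
      (G.deleteEdges
        (⋃ p ∈ (↑Q : Set (G.Walk u v)), {e | e ∈ p.edges})).Reachable u v →
      ∑ p ∈ P, p.length ≤ ∑ p ∈ Q, p.length)
    (d : G.Walk u v) (hd : d.IsPath)
    (hddisj : ∀ p ∈ P, ∀ e ∈ d.edges, e ∉ p.edges)
    (hdmin : ∀ d' : G.Walk u v, d'.IsPath →
      (∀ p ∈ P, ∀ e ∈ d'.edges, e ∉ p.edges) → d.length ≤ d'.length) :
    (((d.support.toFinset.filter fun w =>
        ¬ max 0 (lam / 2 - 2) < 2 * (P.filter fun p => w ∈ p.support).card).card : ℝ))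
      < 8 * (Fintype.card V) / δ := by
  classical
  have hnontriv : Nontrivial V := ⟨u, v, huv⟩
  set n := Fintype.card V with hn
  have hn2 : 2 ≤ n := Fintype.one_lt_card
  set s := max 0 (lam / 2 - 2) with hs
  have hs' : s = lam / 2 - 2 := by rw [hs, Nat.zero_max]
  set U := d.support.toFinset.filter
      (fun w => ¬ s < 2 * (P.filter fun p => w ∈ p.support).card) with hU
  have hUsupp : ∀ w ∈ U, w ∈ d.support := by
    intro w hw
    rw [hU, Finset.mem_filter, List.mem_toFinset] at hw
    exact hw.1
  have hUn : U.card ≤ n :=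
    le_trans (Finset.card_le_card (Finset.filter_subset _ _)) (Finset.card_le_univ _)
  have hδR : (0:ℝ) < (δ:ℝ) := by exact_mod_cast hδ
  by_cases hδ8 : δ < 8
  · rw [lt_div_iff₀ hδR]
    have h1 : (U.card : ℝ) ≤ (n:ℝ) := by exact_mod_cast hUn
    have h2 : (δ:ℝ) ≤ 7 := by exact_mod_cast Nat.lt_succ_iff.mp hδ8
    have h3 : (2:ℝ) ≤ (n:ℝ) := by exact_mod_cast hn2
    nlinarith
  · push_neg at hδ8
    by_contra hcon
    push_neg at hcon
    rw [div_le_iff₀ hδR] at hcon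
    have hkey : 8 * n ≤ U.card * δ := by exact_mod_cast hcon
    -- the set of "free" neighbors of w
    set F : V → Finset V := fun w => (G.neighborFinset w).filter
        (fun x => s(w,x) ∉ d.edges ∧ ∀ p ∈ P, s(w,x) ∉ p.edges) with hF
    have hFcard : ∀ w ∈ U, δ - s - 2 ≤ (F w).card := by
      intro w hw
      rw [hU, Finset.mem_filter] at hw
      have h2c : 2 * (P.filter fun p => w ∈ p.support).card ≤ s := le_of_not_gt hw.2
      set B := G.neighborFinset w \ F w with hB
      have hFsub : F w ⊆ G.neighborFinset w := by
        rw [hF]; exact Finset.filter_subset _ _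
      have hsplit : B.card = (G.neighborFinset w).card - (F w).card :=
        Finset.card_sdiff_of_subset hFsub
      have hFle : (F w).card ≤ (G.neighborFinset w).card := Finset.card_le_card hFsub
      have hBsub : B ⊆ ((G.neighborFinset w).filter (fun x => s(w,x) ∈ d.edges)) ∪
          P.biUnion (fun p => (G.neighborFinset w).filter (fun x => s(w,x) ∈ p.edges)) := by
        intro x hx
        rw [hB, Finset.mem_sdiff] at hx
        have hxn := hx.1
        have hx2 : ¬ (s(w,x) ∉ d.edges ∧ ∀ p ∈ P, s(w,x) ∉ p.edges) := by
          intro hc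
          exact hx.2 (by rw [hF]; exact Finset.mem_filter.mpr ⟨hxn, hc⟩)
        rw [Finset.mem_union, Finset.mem_filter, Finset.mem_biUnion]
        push_neg at hx2
        by_cases hxd : s(w,x) ∈ d.edges
        · exact Or.inl ⟨hxn, hxd⟩
        · obtain ⟨p, hp, hpe⟩ := hx2 hxd
          exact Or.inr ⟨p, hp, Finset.mem_filter.mpr ⟨hxn, hpe⟩⟩
      have hBcard : B.card ≤ 2 + s := by
        calc B.card ≤ _ := Finset.card_le_card hBsub
          _ ≤ ((G.neighborFinset w).filter (fun x => s(w,x) ∈ d.edges)).card +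
              (P.biUnion (fun p => (G.neighborFinset w).filter
                (fun x => s(w,x) ∈ p.edges))).card := Finset.card_union_le _ _
          _ ≤ 2 + s := by
            gcongr
            · exact aux_two w d hd
            · calc (P.biUnion _).card
                  ≤ ∑ p ∈ P, ((G.neighborFinset w).filter
                      (fun x => s(w,x) ∈ p.edges)).card := Finset.card_biUnion_le
                _ ≤ s := by
                  rw [← Finset.sum_filter_add_sum_filter_not P (fun p => w ∈ p.support)]
                  have hz : ∑ p ∈ P.filter (fun p => ¬ w ∈ p.support),
                      ((G.neighborFinset w).filter (fun x => s(w,x) ∈ p.edges)).card = 0 := by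
                    apply Finset.sum_eq_zero
                    intro p hp
                    rw [Finset.mem_filter] at hp
                    rw [Finset.card_eq_zero, Finset.filter_eq_empty_iff]
                    intro x _ hx
                    exact hp.2 (p.fst_mem_support_of_mem_edges hx)
                  rw [hz, add_zero]
                  calc ∑ p ∈ P.filter (fun p => w ∈ p.support),
                        ((G.neighborFinset w).filter (fun x => s(w,x) ∈ p.edges)).card
                      ≤ ∑ p ∈ P.filter (fun p => w ∈ p.support), 2 := by
                        apply Finset.sum_le_sum
                        intro p hp
                        exact aux_two w p (hPpath p (Finset.mem_filter.mp hp).1)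
                    _ = 2 * (P.filter fun p => w ∈ p.support).card := by
                        rw [Finset.sum_const, smul_eq_mul, mul_comm]
                    _ ≤ s := h2c
      have hdegw := hdeg w
      rw [← G.card_neighborFinset_eq_degree] at hdegw
      omega
    -- double counting
    have hdc : ∑ w ∈ U, (F w).card = ∑ x : V, (U.filter fun w => x ∈ F w).card := by
      have h1 : ∀ w, (F w).card = ∑ x : V, (if x ∈ F w then 1 else 0) := by
        intro w
        simp [Finset.sum_ite_mem]
      calc ∑ w ∈ U, (F w).card = ∑ w ∈ U, ∑ x : V, (if x ∈ F w then 1 else 0) := by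
            apply Finset.sum_congr rfl; intro w _; exact h1 w
        _ = ∑ x : V, ∑ w ∈ U, (if x ∈ F w then 1 else 0) := Finset.sum_comm
        _ = ∑ x : V, (U.filter fun w => x ∈ F w).card := by
            apply Finset.sum_congr rfl; intro x _
            rw [Finset.card_filter]
    -- lower bound on the sum
    have hdouble : 2 * (δ - s - 2) ≥ δ := by omega
    have hsum : 4 * n ≤ ∑ w ∈ U, (F w).card := by
      have h1 : U.card * (δ - s - 2) ≤ ∑ w ∈ U, (F w).card := by
        calc U.card * (δ - s - 2) = ∑ _w ∈ U, (δ - s - 2) := by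
              rw [Finset.sum_const, smul_eq_mul]
          _ ≤ ∑ w ∈ U, (F w).card := Finset.sum_le_sum hFcard
      have h2 : U.card * δ ≤ U.card * (2 * (δ - s - 2)) :=
        Nat.mul_le_mul_left _ hdouble
      nlinarith [hkey, h1, h2]
    -- pigeonhole
    have hex : ∃ x : V, 4 ≤ (U.filter fun w => x ∈ F w).card := by
      by_contra hno
      push_neg at hno
      have : ∑ x : V, (U.filter fun w => x ∈ F w).card ≤ ∑ _x : V, 3 :=
        Finset.sum_le_sum (fun x _ => Nat.lt_succ_iff.mp (hno x))
      rw [Finset.sum_const, smul_eq_mul, Finset.card_univ] at this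
      rw [hdc] at hsum
      omega
    obtain ⟨x, hx4⟩ := hex
    set S := U.filter (fun w => x ∈ F w) with hS
    have hSsupp : ∀ w ∈ S, w ∈ d.support := by
      intro w hw
      exact hUsupp w (Finset.mem_filter.mp hw).1
    have hSF : ∀ w ∈ S, x ∈ F w := fun w hw => (Finset.mem_filter.mp hw).2
    -- indices along d via takeUntil length
    set t : V → ℕ := fun w => if h : w ∈ d.support then (d.takeUntil w h).length else 0
      with ht
    have htv : ∀ (w) (h : w ∈ d.support), t w = (d.takeUntil w h).length := by
      intro w h; rw [ht]; simp [h]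
    have hgv : ∀ w ∈ S, d.getVert (t w) = w := by
      intro w hw
      have h := hSsupp w hw
      rw [htv w h]
      exact aux_getVert d h
    set I := S.image t with hI
    have hIcard : 4 ≤ I.card := by
      rw [hI, Finset.card_image_of_injOn]
      · exact le_trans hx4 (le_of_eq rfl)
      · intro w1 hw1 w2 hw2 h12
        have := hgv w1 hw1
        rw [h12, hgv w2 hw2] at this
        exact this.symm
    have hIne : I.Nonempty := Finset.card_pos.mp (by omega)
    set i1 := I.min' hIne with hi1
    set i4 := I.max' hIne with hi4
    have hIsub : I ⊆ Finset.Icc i1 i4 := by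
      intro i hi
      rw [Finset.mem_Icc]
      exact ⟨Finset.min'_le I i hi, Finset.le_max' I i hi⟩
    have hgap : i1 + 3 ≤ i4 := by
      have := Finset.card_le_card hIsub
      rw [Nat.card_Icc] at this
      omega
    obtain ⟨w1, hw1S, hw1⟩ := Finset.mem_image.mp (I.min'_mem hIne)
    obtain ⟨w4, hw4S, hw4⟩ := Finset.mem_image.mp (I.max'_mem hIne)
    have h1 : w1 ∈ d.support := hSsupp w1 hw1S
    have h4 : w4 ∈ d.support := hSsupp w4 hw4S
    have hadj1 : G.Adj w1 x := by
      have := hSF w1 hw1S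
      rw [hF, Finset.mem_filter, SimpleGraph.mem_neighborFinset] at this
      exact this.1
    have hadj4 : G.Adj x w4 := by
      have := hSF w4 hw4S
      rw [hF, Finset.mem_filter, SimpleGraph.mem_neighborFinset] at this
      exact this.1.symm
    set q : G.Walk u v := (d.takeUntil w1 h1).append
      (SimpleGraph.Walk.cons hadj1 (SimpleGraph.Walk.cons hadj4 (d.dropUntil w4 h4)))
      with hq
    -- length of q
    have hsplit4 : (d.takeUntil w4 h4).length + (d.dropUntil w4 h4).length = d.length := by
      have := congrArg SimpleGraph.Walk.length (SimpleGraph.Walk.take_spec d h4)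
      rwa [SimpleGraph.Walk.length_append] at this
    have hqlen : q.length + 1 ≤ d.length := by
      have hql : q.length = (d.takeUntil w1 h1).length + (1 + (1 +
          (d.dropUntil w4 h4).length)) := by
        rw [hq, SimpleGraph.Walk.length_append, SimpleGraph.Walk.length_cons,
          SimpleGraph.Walk.length_cons]
        omega
      have e1 : (d.takeUntil w1 h1).length = i1 := by rw [← htv w1 h1, hw1]
      have e4 : (d.takeUntil w4 h4).length = i4 := by rw [← htv w4 h4, hw4]
      omega
    -- q.bypass is a valid competitor
    have hqdisj : ∀ p ∈ P, ∀ e ∈ q.bypass.edges, e ∉ p.edges := by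
      intro p hp e he hep
      have he' : e ∈ q.edges := q.edges_bypass_subset he
      rw [hq, SimpleGraph.Walk.edges_append, SimpleGraph.Walk.edges_cons,
        SimpleGraph.Walk.edges_cons] at he'
      rcases List.mem_append.mp he' with h | h
      · exact hddisj p hp e (d.edges_takeUntil_subset h1 h) hep
      · simp only [List.mem_cons] at h
        rcases h with h | h | h
        · have := hSF w1 hw1S
          rw [hF, Finset.mem_filter] at this
          rw [h] at hep
          exact this.2.2 p hp hep
        · have := hSF w4 hw4S
          rw [hF, Finset.mem_filter] at this
          rw [h] at hep
          rw [Sym2.eq_swap] at hep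
          exact this.2.2 p hp hep
        · exact hddisj p hp e (d.edges_dropUntil_subset h4 h) hep
    have hfin := hdmin q.bypass q.bypass_isPath hqdisj
    have := q.length_bypass_le
    omega
end

section
/- In the setting of the congested/uncongested decomposition of the path P⋄ (with 𝒫 a minimum-total-length family of s edge-disjoint u–v paths edge-disjoint from P⋄), the number |C| of congested vertices of P⋄ is at most |U| + 1, where U is the set of non-congested vertices of P⋄. In particular, no edge of P⋄ has both endpoints congested. -/
set_option linter.unusedSectionVars false

open SimpleGraph Walk

section Aux
variable {V : Type*} [DecidableEq V] {G : SimpleGraph V}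

lemma stmt10_edge_getVert_mem {u v : V} (p : G.Walk u v) :
    ∀ {i : ℕ}, i < p.length → s(p.getVert i, p.getVert (i+1)) ∈ p.edges := by
  induction p with
  | nil => intro i hi; simp at hi
  | cons r q ih =>
    intro i hi
    cases i with
    | zero => simp
    | succ n =>
      simp only [Walk.getVert_cons_succ, edges_cons, List.mem_cons]
      right
      exact ih (by simpa [Walk.length_cons, Nat.succ_lt_succ_iff] using hi)

lemma stmt10_getVert_eq_support_get {u v : V} (p : G.Walk u v) :
    ∀ {i : ℕ} (hi : i ≤ p.length),
      p.getVert i = p.support.get ⟨i, by simp [Walk.length_support]; omega⟩ := by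
  induction p with
  | nil =>
    intro i hi
    simp only [Walk.length_nil, Nat.le_zero] at hi
    subst hi
    simp
  | cons r q ih =>
    intro i hi
    cases i with
    | zero => simp
    | succ n =>
      simp only [Walk.getVert_cons_succ, Walk.support_cons]
      rw [ih (by simpa [Walk.length_cons, Nat.succ_le_succ_iff] using hi)]
      rfl

lemma stmt10_getVert_injOn {u v : V} {p : G.Walk u v} (hp : p.IsPath) {i j : ℕ}
    (hi : i ≤ p.length) (hj : j ≤ p.length) (h : p.getVert i = p.getVert j) : i = j := by
  rw [stmt10_getVert_eq_support_get p hi, stmt10_getVert_eq_support_get p hj] at h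
  have hn := hp.support_nodup
  have := List.Nodup.get_inj_iff hn |>.mp h
  simpa using this

lemma stmt10_order_cases {w1 w2 : V} : ∀ {u v} (p : G.Walk u v) (h1 : w1 ∈ p.support)
    (h2 : w2 ∈ p.support),
    w2 ∈ (p.dropUntil w1 h1).support ∨ w1 ∈ (p.dropUntil w2 h2).support := by
  intro u v p
  induction p with
  | nil =>
    intro h1 h2
    simp only [support_nil, List.mem_singleton] at h1 h2
    subst h1; subst h2
    exact Or.inl (start_mem_support _)
  | cons r q ih =>
    rename_i a b c
    intro h1 h2
    by_cases e1 : a = w1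
    · subst e1
      left
      simp only [Walk.dropUntil, dif_pos rfl]
      exact h2
    · by_cases e2 : a = w2
      · subst e2
        right
        simp only [Walk.dropUntil, dif_pos rfl]
        exact h1
      · have h1' : w1 ∈ q.support := by
          cases h1 with
          | head => exact absurd rfl e1
          | tail _ h => exact h
        have h2' : w2 ∈ q.support := by
          cases h2 with
          | head => exact absurd rfl e2
          | tail _ h => exact h
        have := ih h1' h2'
        simp only [Walk.dropUntil, dif_neg e1, dif_neg e2]
        exact this

lemma stmt10_reroute_aux {u v w1 w2 : V} (p : G.Walk u v) (hp : p.IsPath) (hadj : G.Adj w1 w2)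
    (hw1 : w1 ∈ p.support) (hw2 : w2 ∈ (p.dropUntil w1 hw1).support)
    (he : s(w1, w2) ∉ p.edges) :
    ∃ p' : G.Walk u v, p'.IsPath ∧ p'.length < p.length ∧ s(w1, w2) ∈ p'.edges ∧
      (∀ f ∈ p'.edges, f = s(w1, w2) ∨ f ∈ p.edges) ∧
      ∀ H : SimpleGraph V, (∀ f ∈ p.edges, f ∉ p'.edges → f ∈ H.edgeSet) →
        H.Reachable w1 w2 := by
  have hne : w1 ≠ w2 := hadj.ne
  set t := p.takeUntil w1 hw1 with ht
  set r := p.dropUntil w1 hw1 with hr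
  set mid := r.takeUntil w2 hw2 with hmid
  set rest := r.dropUntil w2 hw2 with hrest
  have hps : t.append r = p := p.take_spec hw1
  have hrs : mid.append rest = r := r.take_spec hw2
  have hpe : p.edges = t.edges ++ (mid.edges ++ rest.edges) := by
    conv_lhs => rw [← hps, ← hrs]
    rw [Walk.edges_append, Walk.edges_append]
  have hpsup : p.support = t.support ++ r.support.tail := by
    conv_lhs => rw [← hps]
    rw [Walk.support_append]
  have hrsup : r.support = mid.support ++ rest.support.tail := by
    conv_lhs => rw [← hrs]
    rw [Walk.support_append]
  have hrpath : r.IsPath := hp.dropUntil hw1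
  have htpath : t.IsPath := hp.takeUntil hw1
  have hrestpath : rest.IsPath := hrpath.dropUntil hw2
  have hpedup : p.edges.Nodup := hp.isTrail.edges_nodup
  have hmid1 : 1 ≤ mid.length := by
    rcases Nat.eq_zero_or_pos mid.length with h0 | h
    · exact absurd (mid.getVert_zero.symm.trans
        (by rw [← h0]; exact mid.getVert_length)) hne
    · exact h
  have hmid2 : 2 ≤ mid.length := by
    rcases Nat.lt_or_ge mid.length 2 with h | h
    · exfalso
      have h1 : mid.length = 1 := le_antisymm (by omega) hmid1
      have : s(mid.getVert 0, mid.getVert 1) ∈ mid.edges :=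
        stmt10_edge_getVert_mem mid (by omega)
      rw [mid.getVert_zero, show (1:ℕ) = mid.length from h1.symm,
        mid.getVert_length] at this
      exact he (p.edges_dropUntil_subset hw1 (r.edges_takeUntil_subset hw2 this))
    · exact h
  refine ⟨t.append (Walk.cons hadj rest), ?_, ?_, ?_, ?_, ?_⟩
  · rw [Walk.isPath_def, Walk.support_append, Walk.support_cons, List.tail_cons]
    refine List.Nodup.append htpath.support_nodup hrestpath.support_nodup ?_
    intro x hxt hxrest
    have hdisj1 : t.support.Disjoint r.support.tail :=
      List.disjoint_of_nodup_append (by rw [← hpsup]; exact hp.support_nodup)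
    have hxr : x ∈ r.support := r.support_dropUntil_subset hw2 hxrest
    rw [r.support_eq_cons] at hxr
    rcases List.mem_cons.mp hxr with heq | hxtail
    · have hdisj2 : mid.support.Disjoint rest.support.tail :=
        List.disjoint_of_nodup_append (by rw [← hrsup]; exact hrpath.support_nodup)
      rw [rest.support_eq_cons] at hxrest
      rcases List.mem_cons.mp hxrest with h' | h'
      · exact hne (heq.symm.trans h')
      · exact hdisj2 mid.start_mem_support (heq ▸ h')
    · exact hdisj1 hxt hxtail
  · have l1 : (t.append (Walk.cons hadj rest)).length = t.length + (rest.length + 1) := by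
      rw [Walk.length_append, Walk.length_cons]
    have l2 : p.length = t.length + (mid.length + rest.length) := by
      conv_lhs => rw [← hps, ← hrs]
      rw [Walk.length_append, Walk.length_append]
    omega
  · rw [Walk.edges_append, Walk.edges_cons]
    exact List.mem_append_right _ List.mem_cons_self
  · intro f hf
    rw [Walk.edges_append, Walk.edges_cons] at hf
    rcases List.mem_append.mp hf with h' | h'
    · exact Or.inr (p.edges_takeUntil_subset hw1 h')
    · rcases List.mem_cons.mp h' with rfl | h''
      · exact Or.inl rfl
      · exact Or.inr (p.edges_dropUntil_subset hw1 (r.edges_dropUntil_subset hw2 h''))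
  · intro H hH
    refine ⟨(mid.transfer H ?_)⟩
    intro f hf
    have hfp : f ∈ p.edges := by
      rw [hpe]; exact List.mem_append_right _ (List.mem_append_left _ hf)
    refine hH f hfp ?_
    rw [Walk.edges_append, Walk.edges_cons]
    rw [hpe] at hpedup
    have hd1 : t.edges.Disjoint (mid.edges ++ rest.edges) :=
      List.disjoint_of_nodup_append hpedup
    have hd2 : mid.edges.Disjoint rest.edges :=
      List.disjoint_of_nodup_append ((List.nodup_append.mp hpedup).2.1)
    intro hmem
    rcases List.mem_append.mp hmem with h' | h'
    · exact hd1 h' (List.mem_append_left _ hf)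
    · rcases List.mem_cons.mp h' with rfl | h''
      · exact he hfp
      · exact hd2 hf h''

/-- symmetric version -/
lemma stmt10_reroute {u v w1 w2 : V} (p : G.Walk u v) (hp : p.IsPath) (hadj : G.Adj w1 w2)
    (hw1 : w1 ∈ p.support) (hw2 : w2 ∈ p.support)
    (he : s(w1, w2) ∉ p.edges) :
    ∃ p' : G.Walk u v, p'.IsPath ∧ p'.length < p.length ∧ s(w1, w2) ∈ p'.edges ∧
      (∀ f ∈ p'.edges, f = s(w1, w2) ∨ f ∈ p.edges) ∧
      ∀ H : SimpleGraph V, (∀ f ∈ p.edges, f ∉ p'.edges → f ∈ H.edgeSet) →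
        H.Reachable w1 w2 := by
  rcases stmt10_order_cases p hw1 hw2 with hcase | hcase
  · exact stmt10_reroute_aux p hp hadj hw1 hcase he
  · obtain ⟨p', ha, hb, hc, hdd, hee⟩ := stmt10_reroute_aux p hp hadj.symm hw2 hcase
      (by rwa [Sym2.eq_swap])
    refine ⟨p', ha, hb, by rwa [Sym2.eq_swap], ?_, fun H hH => (hee H hH).symm⟩
    intro f hf
    rcases hdd f hf with h | h
    · exact Or.inl (h.trans Sym2.eq_swap)
    · exact Or.inr h

lemma stmt10_reach_lift {H1 H2 : SimpleGraph V}
    (h : ∀ a b, H1.Adj a b → H2.Reachable a b) :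
    ∀ {x y : V}, H1.Walk x y → H2.Reachable x y := by
  intro x y W
  induction W with
  | nil => exact Reachable.refl _
  | cons hadj _ ih => exact (h _ _ hadj).trans ih

end Aux

/-- In the setting of the congested/uncongested decomposition of the path `d`
(with `P` a minimum-total-length family of `s = max 0 (⌊lam/2⌋ − 2)` pairwise
edge-disjoint `u`–`v` paths, edge-disjoint from `d`, whose removal keeps `u`
and `v` connected, and `d` a minimum-length path edge-disjoint from `P`), the
number `|C|` of congested vertices of `d` (those on more than `s/2` paths of
`P`) is at most `|U| + 1`, where `U` is the set of non-congested vertices of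
`d`; in particular no edge of `d` has both endpoints congested. -/
theorem stmt_10 {V : Type*} [Fintype V] [DecidableEq V] (G : SimpleGraph V)
    (u v : V) (huv : u ≠ v)
    (P : Finset (G.Walk u v)) (s : ℕ)
    (hPcard : P.card = s)
    (hPpath : ∀ p ∈ P, p.IsPath)
    (hPdisj : ∀ p ∈ P, ∀ q ∈ P, p ≠ q → ∀ e ∈ p.edges, e ∉ q.edges)
    (hPconn : (G.deleteEdges
        (⋃ p ∈ (↑P : Set (G.Walk u v)), {e | e ∈ p.edges})).Reachable u v)
    (hPmin : ∀ Q : Finset (G.Walk u v), Q.card = s →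
      (∀ p ∈ Q, p.IsPath) →
      (∀ p ∈ Q, ∀ q ∈ Q, p ≠ q → ∀ e ∈ p.edges, e ∉ q.edges) →
      (G.deleteEdges
        (⋃ p ∈ (↑Q : Set (G.Walk u v)), {e | e ∈ p.edges})).Reachable u v →
      ∑ p ∈ P, p.length ≤ ∑ p ∈ Q, p.length)
    (d : G.Walk u v) (hd : d.IsPath)
    (hddisj : ∀ p ∈ P, ∀ e ∈ d.edges, e ∉ p.edges)
    (hdmin : ∀ d' : G.Walk u v, d'.IsPath →
      (∀ p ∈ P, ∀ e ∈ d'.edges, e ∉ p.edges) → d.length ≤ d'.length) :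
    (d.support.toFinset.filter fun w =>
        s < 2 * (P.filter fun p => w ∈ p.support).card).card
      ≤ (d.support.toFinset.filter fun w =>
        ¬ s < 2 * (P.filter fun p => w ∈ p.support).card).card + 1 ∧
    ∀ i < d.length,
      ¬ (s < 2 * (P.filter fun p => d.getVert i ∈ p.support).card ∧
         s < 2 * (P.filter fun p => d.getVert (i + 1) ∈ p.support).card) := by
  classical
  have key : ∀ i < d.length,
      ¬ (s < 2 * (P.filter fun p => d.getVert i ∈ p.support).card ∧
         s < 2 * (P.filter fun p => d.getVert (i + 1) ∈ p.support).card) := by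
    rintro i hi ⟨hc1, hc2⟩
    set w1 := d.getVert i with hw1def
    set w2 := d.getVert (i+1) with hw2def
    have hadj : G.Adj w1 w2 := d.adj_getVert_succ hi
    have hed : s(w1, w2) ∈ d.edges := stmt10_edge_getVert_mem d hi
    -- find a common path
    obtain ⟨p, hpP, hpw1, hpw2⟩ : ∃ p ∈ P, w1 ∈ p.support ∧ w2 ∈ p.support := by
      set A := P.filter fun p => w1 ∈ p.support with hA
      set B := P.filter fun p => w2 ∈ p.support with hB
      have hABne : (A ∩ B).Nonempty := by
        by_contra hcon
        rw [Finset.not_nonempty_iff_eq_empty] at hcon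
        have h1 : (A ∪ B).card + (A ∩ B).card = A.card + B.card :=
          Finset.card_union_add_card_inter A B
        have h2 : (A ∪ B).card ≤ P.card :=
          Finset.card_le_card (Finset.union_subset (Finset.filter_subset _ _)
            (Finset.filter_subset _ _))
        rw [hcon, Finset.card_empty] at h1
        omega
      obtain ⟨p, hp⟩ := hABne
      rw [Finset.mem_inter, hA, hB, Finset.mem_filter, Finset.mem_filter] at hp
      exact ⟨p, hp.1.1, hp.1.2, hp.2.2⟩
    have hep : s(w1, w2) ∉ p.edges := hddisj p hpP _ hed
    obtain ⟨p', hp'path, hp'len, hep', hsub, hreach⟩ :=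
      stmt10_reroute p (hPpath p hpP) hadj hpw1 hpw2 hep
    set e := s(w1, w2) with hedef
    have hp'ne : ∀ q ∈ P, p' ≠ q := fun q hq hq' => hddisj q hq e hed (hq' ▸ hep')
    have hp'notmem : p' ∉ P.erase p := fun h => hp'ne p' (Finset.mem_of_mem_erase h) rfl
    set Q := insert p' (P.erase p) with hQ
    have hs1 : 1 ≤ s := by
      rw [← hPcard]
      exact Finset.card_pos.mpr ⟨p, hpP⟩
    have hQcard : Q.card = s := by
      rw [hQ, Finset.card_insert_of_notMem hp'notmem, Finset.card_erase_of_mem hpP, hPcard]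
      omega
    have hQmem : ∀ q ∈ Q, q = p' ∨ (q ∈ P ∧ q ≠ p) := by
      intro q hq
      rcases Finset.mem_insert.mp hq with h | h
      · exact Or.inl h
      · exact Or.inr ⟨Finset.mem_of_mem_erase h, Finset.ne_of_mem_erase h⟩
    have hQpath : ∀ q ∈ Q, q.IsPath := by
      intro q hq
      rcases hQmem q hq with rfl | ⟨h1, _⟩
      · exact hp'path
      · exact hPpath q h1
    -- edges of members of Q avoid the removed middle edges
    have hQavoid : ∀ f, f ∈ p.edges → f ∉ p'.edges → ∀ q ∈ Q, f ∉ q.edges := by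
      intro f hfp hfp' q hq hfq
      rcases hQmem q hq with rfl | ⟨h1, h2⟩
      · exact hfp' hfq
      · exact hPdisj p hpP q h1 (Ne.symm h2) f hfp hfq
    have hQdisj : ∀ q1 ∈ Q, ∀ q2 ∈ Q, q1 ≠ q2 → ∀ f ∈ q1.edges, f ∉ q2.edges := by
      intro q1 hq1 q2 hq2 hne f hf1 hf2
      rcases hQmem q1 hq1 with rfl | ⟨h11, h12⟩
      · rcases hQmem q2 hq2 with rfl | ⟨h21, h22⟩
        · exact hne rfl
        · rcases hsub f hf1 with rfl | hfp
          · exact hddisj q2 h21 e hed hf2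
          · exact hPdisj p hpP q2 h21 (Ne.symm h22) f hfp hf2
      · rcases hQmem q2 hq2 with rfl | ⟨h21, h22⟩
        · rcases hsub f hf2 with rfl | hfp
          · exact hddisj q1 h11 e hed hf1
          · exact hPdisj q1 h11 p hpP h12 f hf1 hfp
        · exact hPdisj q1 h11 q2 h21 hne f hf1 hf2
    -- connectivity
    have hQconn : (G.deleteEdges
        (⋃ q ∈ (↑Q : Set (G.Walk u v)), {f | f ∈ q.edges})).Reachable u v := by
      set SP := (⋃ p ∈ (↑P : Set (G.Walk u v)), {e | e ∈ p.edges}) with hSP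
      set SQ := (⋃ q ∈ (↑Q : Set (G.Walk u v)), {f | f ∈ q.edges}) with hSQ
      have hmemSQ : ∀ f, f ∈ SQ ↔ ∃ q ∈ Q, f ∈ q.edges := by
        intro f
        simp [hSQ]
      have hmemSP : ∀ f, f ∈ SP ↔ ∃ q ∈ P, f ∈ q.edges := by
        intro f
        simp [hSP]
      have hw12 : (G.deleteEdges SQ).Reachable w1 w2 := by
        refine hreach _ ?_
        intro f hfp hfp'
        rw [SimpleGraph.edgeSet_deleteEdges]
        refine ⟨p.edges_subset_edgeSet hfp, ?_⟩
        rw [hmemSQ]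
        rintro ⟨q, hq, hfq⟩
        exact hQavoid f hfp hfp' q hq hfq
      have step1 : ∀ a b, (G.deleteEdges SP).Adj a b → (G.deleteEdges SQ).Reachable a b := by
        intro a b hab
        rw [SimpleGraph.deleteEdges_adj] at hab
        by_cases hfe : s(a, b) = e
        · rw [hedef, Sym2.eq_iff] at hfe
          rcases hfe with ⟨rfl, rfl⟩ | ⟨rfl, rfl⟩
          · exact hw12
          · exact hw12.symm
        · refine SimpleGraph.Adj.reachable ?_
          rw [SimpleGraph.deleteEdges_adj]
          refine ⟨hab.1, ?_⟩
          rw [hmemSQ]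
          rintro ⟨q, hq, hfq⟩
          rcases hQmem q hq with rfl | ⟨h1, _⟩
          · rcases hsub _ hfq with h | h
            · exact hfe h
            · exact hab.2 ((hmemSP _).mpr ⟨p, hpP, h⟩)
          · exact hab.2 ((hmemSP _).mpr ⟨q, h1, hfq⟩)
      obtain ⟨W⟩ := hPconn
      exact stmt10_reach_lift step1 W
    have hsum2 := hPmin Q hQcard hQpath hQdisj hQconn
    have hsum : ∑ q ∈ Q, q.length < ∑ q ∈ P, q.length := by
      rw [hQ, Finset.sum_insert hp'notmem]
      have h3 : ∑ q ∈ P.erase p, q.length + p.length = ∑ q ∈ P, q.length :=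
        Finset.sum_erase_add P _ hpP
      omega
    omega
  refine ⟨?_, key⟩
  set C := d.support.toFinset.filter fun w =>
    s < 2 * (P.filter fun p => w ∈ p.support).card with hC
  set U := d.support.toFinset.filter fun w =>
    ¬ s < 2 * (P.filter fun p => w ∈ p.support).card with hU
  have idx_facts : ∀ w ∈ C, w ≠ v →
      List.idxOf w d.support < d.length ∧ d.getVert (List.idxOf w d.support) = w := by
    intro w hwC hwv
    simp only [hC, Finset.mem_filter, List.mem_toFinset] at hwC
    obtain ⟨hwsup, hwcong⟩ := hwC
    have hilt : List.idxOf w d.support < d.support.length :=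
      List.idxOf_lt_length_iff.mpr hwsup
    rw [Walk.length_support] at hilt
    have higet : d.getVert (List.idxOf w d.support) = w := by
      rw [stmt10_getVert_eq_support_get d (by omega)]
      exact List.idxOf_get (by rw [Walk.length_support]; omega)
    have hine : List.idxOf w d.support ≠ d.length := by
      intro h
      rw [h, d.getVert_length] at higet
      exact hwv higet.symm
    exact ⟨by omega, higet⟩
  have hstep : (C.erase v).card ≤ U.card := by
    refine Finset.card_le_card_of_injOn
      (fun w => d.getVert (List.idxOf w d.support + 1)) ?_ ?_
    · intro w hw
      have hwv : w ≠ v := Finset.ne_of_mem_erase hw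
      have hwC : w ∈ C := Finset.mem_of_mem_erase hw
      obtain ⟨hilt, higet⟩ := idx_facts w hwC hwv
      have hwcong : s < 2 * (P.filter fun p => w ∈ p.support).card := by
        simp only [hC, Finset.mem_filter, List.mem_toFinset] at hwC
        exact hwC.2
      have hkey := key _ hilt
      rw [higet] at hkey
      have hnotcong : ¬ s < 2 *
          (P.filter fun p => d.getVert (List.idxOf w d.support + 1) ∈ p.support).card :=
        fun h => hkey ⟨hwcong, h⟩
      simp only [hU, Finset.mem_coe, Finset.mem_filter, List.mem_toFinset]
      refine ⟨?_, hnotcong⟩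
      rw [Walk.mem_support_iff_exists_getVert]
      exact ⟨List.idxOf w d.support + 1, rfl, by omega⟩
    · intro w1 hw1 w2 hw2 heq
      simp only [Finset.coe_erase, Set.mem_diff, Finset.mem_coe, Set.mem_singleton_iff] at hw1 hw2
      obtain ⟨hi1, hg1⟩ := idx_facts w1 hw1.1 hw1.2
      obtain ⟨hi2, hg2⟩ := idx_facts w2 hw2.1 hw2.2
      have := stmt10_getVert_injOn hd (i := List.idxOf w1 d.support + 1)
        (j := List.idxOf w2 d.support + 1) (by omega) (by omega) heq
      have hieq : List.idxOf w1 d.support = List.idxOf w2 d.support := by omega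
      rw [← hg1, ← hg2, hieq]
  have hCsub : C ⊆ insert v (C.erase v) := by
    intro x hx
    by_cases hxv : x = v
    · subst hxv; exact Finset.mem_insert_self _ _
    · exact Finset.mem_insert_of_mem (Finset.mem_erase.mpr ⟨hxv, hx⟩)
  calc C.card ≤ (insert v (C.erase v)).card := Finset.card_le_card hCsub
    _ ≤ (C.erase v).card + 1 := Finset.card_insert_le _ _
    _ ≤ U.card + 1 := by omega
end
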